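/- Let ℓ be a prime, c an integer, and s ∈ ℂ with σ = Re s > -1. For u ≥ c, the integral ∫_{ℓ^u ℤ_ℓ^×} |y|'^s ψ(-yη) dy over the set of y ∈ ℚ_ℓ of valuation exactly u, where |y|' = ℓ^{-2⌊v_ℓ(y)/2⌋} (for ℓ odd) and ψ is the standard additive character of ℚ_ℓ, vanishes whenever |η|_ℓ > ℓ^{u+2}, and in general is bounded in absolute value by C ℓ^{-u(σ+1)} with C depending only on σ. Consequently ∫_{ℓ^c ℤ_ℓ} |y|'^s ψ(-yη) dy ≪_{σ,c} (1 + |η|_ℓ)^{-σ-1}. -/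

import Mathlib

/-!
On the shell `|y| = ℓ^{-u}` the weight `|y|'^s` is constant, and by the ultrametric inequality the
shell is invariant under translation by any `a` with `|a| < ℓ^{-u}`. Once `|η| > ℓ^{u+1}` such an
`a` can be chosen with `ψ(-aη) ≠ 1`, and translation invariance of Haar measure shows that the
shell integral equals `ψ(-aη)` times itself, hence vanishes.

The ball `ℓ^u ℤ_ℓ` is the disjoint union of `ℓ` translates of `ℓ^{u+1} ℤ_ℓ`, so it has measure
`ℓ^{-u}`; this gives the shell bound `≪ ℓ^{-u(σ+1)}`, and for `σ > -1` these bounds sum to a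
geometric series, giving integrability over balls. For the decay in `η`, the shells with
`ℓ^{u+1} < |η|` contribute nothing, so the integral over `ℓ^c ℤ_ℓ` equals the one over a
smaller ball `ℓ^t ℤ_ℓ` with `ℓ^{-t} ≍ (1 + |η|)^{-1}`, and the latter is `≪ ℓ^{-t(σ+1)}`.
-/

open MeasureTheory Filter Topology

theorem setIntegral_eq_zero_of_add_left_eigen {G : Type*} [AddGroup G] [MeasurableSpace G]
    [MeasurableAdd G] {μ : Measure G} [μ.IsAddLeftInvariant] {f : G → ℂ} {B : Set G}
    (hB : MeasurableSet B) {a : G} (hBa : (a + ·) ⁻¹' B = B) {z : ℂ}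
    (hf : ∀ y, f (a + y) = z * f y) (hz : z ≠ 1) : ∫ y in B, f y ∂μ = 0 := by
  have hshift : ∫ y in B, f y ∂μ = z * ∫ y in B, f y ∂μ := by
    rw [← integral_const_mul, ← integral_indicator hB, ← integral_indicator hB,
      ← integral_add_left_eq_self _ a]
    congr 1 with y
    have hmem : a + y ∈ B ↔ y ∈ B := by rw [← Set.mem_preimage (f := (a + ·)), hBa]
    by_cases hy : y ∈ B <;> simp [Set.indicator, hy, hmem, hf]
  have := sub_eq_zero.mpr hshift
  rw [← one_sub_mul] at this
  exact (mul_eq_zero.mp this).resolve_left (sub_ne_zero.mpr hz.symm)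

theorem continuous_of_map_add_eq_mul_of_eventually_eq_one {G M : Type*} [AddGroup G]
    [TopologicalSpace G] [IsTopologicalAddGroup G] [MulOneClass M] [TopologicalSpace M]
    {ψ : G → M} (hψ_add : ∀ x y, ψ (x + y) = ψ x * ψ y) (hψ_one : ∀ᶠ x in 𝓝 0, ψ x = 1) :
    Continuous ψ := by
  refine continuous_iff_continuousAt.2 fun x ↦ (continuousAt_const (y := ψ x)).congr ?_
  have : Tendsto (-x + ·) (𝓝 x) (𝓝 0) := by
    simpa using (continuous_const_add (-x)).tendsto x
  filter_upwards [this.eventually hψ_one] with y hy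
  rw [← add_neg_cancel_left x y, hψ_add, hy, mul_one]

namespace IsUltrametricDist

theorem norm_add_eq_of_norm_lt {E : Type*} [NormedAddCommGroup E] [IsUltrametricDist E]
    {a y : E} (h : ‖a‖ < ‖y‖) : ‖a + y‖ = ‖y‖ := by
  rw [IsUltrametricDist.norm_add_eq_max_of_norm_ne_norm h.ne, max_eq_right h.le]

theorem preimage_add_left_normSphere {E : Type*} [NormedAddCommGroup E] [IsUltrametricDist E]
    {a : E} {r : ℝ} (ha : ‖a‖ < r) : (a + ·) ⁻¹' {y : E | ‖y‖ = r} = {y | ‖y‖ = r} := by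
  ext y
  simp only [Set.mem_preimage, Set.mem_ofPred_eq]
  constructor
  · intro h
    rw [← h] at ha
    have := norm_add_eq_of_norm_lt (a := -a) (y := a + y) (by rwa [norm_neg])
    rwa [neg_add_cancel_left, h] at this
  · intro h
    rw [norm_add_eq_of_norm_lt (h ▸ ha), h]

end IsUltrametricDist

theorem rpow_neg_mul_mul_zpow_neg {b : ℝ} (hb : 0 < b) (u : ℤ) (σ : ℝ) :
    b ^ (-(u : ℝ) * σ) * b ^ (-u) = b ^ (-(u : ℝ) * (σ + 1)) := by
  rw [← Real.rpow_intCast, ← Real.rpow_add hb]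
  push_cast
  ring_nf

theorem rpow_le_mul_rpow_neg_of_mul_le {x y M q : ℝ} (hx : 0 ≤ x) (hy : 0 < y) (hq : 0 ≤ q)
    (h : x * y ≤ M) : x ^ q ≤ M ^ q * y ^ (-q) := by
  rw [Real.rpow_neg hy.le, ← div_eq_mul_inv, ← Real.div_rpow ((mul_nonneg hx hy.le).trans h) hy.le]
  exact Real.rpow_le_rpow hx ((le_div_iff₀ hy).mpr h) hq

theorem norm_ofReal_zpow_two_fdiv_cpow_le {b : ℝ} (hb : 1 ≤ b) (v : ℤ) (s : ℂ) :
    ‖((b ^ (-(2 * Int.fdiv v 2)) : ℝ) : ℂ) ^ s‖ ≤ b ^ |s.re| * b ^ (-(v : ℝ) * s.re) := by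
  rw [Complex.norm_cpow_eq_rpow_re_of_pos (zpow_pos (zero_lt_one.trans_le hb) _),
    ← Real.rpow_intCast, ← Real.rpow_mul (zero_le_one.trans hb),
    ← Real.rpow_add (zero_lt_one.trans_le hb)]
  refine Real.rpow_le_rpow_of_exponent_le hb ?_
  rw [Int.fdiv_eq_ediv_of_nonneg v zero_le_two]
  have h0 : (0 : ℝ) ≤ v - 2 * (v / 2 : ℤ) := mod_cast (by omega)
  have h1 : (v : ℝ) - 2 * (v / 2 : ℤ) ≤ 1 := mod_cast (by omega)
  push_cast
  cases abs_cases s.re <;> nlinarith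

namespace Padic

variable {p : ℕ} [hp : Fact p.Prime]

theorem valuation_eq_of_norm_eq {y : ℚ_[p]} {u : ℤ} (h : ‖y‖ = (p : ℝ) ^ (-u)) :
    y.valuation = u := by
  have hp1 : 1 < (p : ℝ) := mod_cast hp.out.one_lt
  have hy : y ≠ 0 := by
    rintro rfl
    exact (zpow_pos (zero_lt_one.trans hp1) (-u)).ne' (by simpa using h.symm)
  rw [norm_eq_zpow_neg_valuation hy] at h
  exact neg_injective (zpow_right_injective₀ (zero_lt_one.trans hp1) hp1.ne' h)

theorem norm_eq_zpow_neg_iff {y : ℚ_[p]} (hy : y ≠ 0) {u : ℤ} :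
    ‖y‖ = (p : ℝ) ^ (-u) ↔ y.valuation = u :=
  ⟨valuation_eq_of_norm_eq, fun h ↦ h ▸ norm_eq_zpow_neg_valuation hy⟩

theorem disjoint_normSphere {u v : ℤ} (huv : u ≠ v) :
    Disjoint {y : ℚ_[p] | ‖y‖ = (p : ℝ) ^ (-u)} {y | ‖y‖ = (p : ℝ) ^ (-v)} :=
  Set.disjoint_left.mpr fun _ hu hv ↦
    huv ((valuation_eq_of_norm_eq hu).symm.trans (valuation_eq_of_norm_eq hv))

theorem normBall_subset_insert_iUnion_normSphere (t : ℤ) :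
    {y : ℚ_[p] | ‖y‖ ≤ (p : ℝ) ^ (-t)} ⊆
      insert 0 (⋃ n : ℕ, {y : ℚ_[p] | ‖y‖ = (p : ℝ) ^ (-(t + n))}) := by
  intro y hy
  rcases eq_or_ne y 0 with rfl | hy0
  · exact Set.mem_insert _ _
  refine Set.mem_insert_of_mem _ (Set.mem_iUnion.mpr ⟨(y.valuation - t).toNat, ?_⟩)
  have hp1 : 1 < (p : ℝ) := mod_cast hp.out.one_lt
  rw [Set.mem_ofPred_eq, norm_eq_zpow_neg_valuation hy0] at hy ⊢
  have := (zpow_le_zpow_iff_right₀ hp1).mp hy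
  congr 2
  omega

theorem normBall_sdiff_normBall_eq_biUnion {c t : ℤ} :
    {y : ℚ_[p] | ‖y‖ ≤ (p : ℝ) ^ (-c)} \ {y | ‖y‖ ≤ (p : ℝ) ^ (-t)} =
      ⋃ u ∈ Finset.Ico c t, {y | ‖y‖ = (p : ℝ) ^ (-u)} := by
  have hp1 : 1 < (p : ℝ) := mod_cast hp.out.one_lt
  ext y
  simp only [Set.mem_sdiff, Set.mem_ofPred_eq, Set.mem_iUnion, Finset.mem_Ico, exists_prop, not_le]
  constructor
  · rintro ⟨hc, ht⟩
    have hy : y ≠ 0 := by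
      rintro rfl
      exact (zpow_pos (zero_lt_one.trans hp1) _).not_gt (by simpa using ht)
    rw [norm_eq_zpow_neg_valuation hy] at hc ht ⊢
    refine ⟨y.valuation, ⟨?_, ?_⟩, rfl⟩
    · have := (zpow_le_zpow_iff_right₀ hp1).mp hc; omega
    · have := (zpow_lt_zpow_iff_right₀ hp1).mp ht; omega
  · rintro ⟨u, ⟨hcu, hut⟩, hy⟩
    rw [hy]
    exact ⟨zpow_le_zpow_right₀ hp1.le (by omega), zpow_lt_zpow_right₀ hp1 (by omega)⟩

theorem exists_zpow_neg_mul_one_add_norm_le (c : ℤ) (η : ℚ_[p]) :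
    ∃ t, c ≤ t ∧ (∀ u, c ≤ u → u < t → (p : ℝ) ^ (u + 1) < ‖η‖) ∧
      (p : ℝ) ^ (-t) * (1 + ‖η‖) ≤ (p : ℝ) ^ (-c) + p := by
  have hp1 : 1 < (p : ℝ) := mod_cast hp.out.one_lt
  have hpR : (0 : ℝ) < p := zero_lt_one.trans hp1
  rcases eq_or_ne η 0 with rfl | hη
  · exact ⟨c, le_rfl, fun u hcu huc ↦ absurd huc hcu.not_gt, by simp [hpR.le]⟩
  refine ⟨max c (-η.valuation - 1), le_max_left _ _, fun u _ hut ↦ ?_, ?_⟩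
  · rw [norm_eq_zpow_neg_valuation hη]
    exact zpow_lt_zpow_right₀ hp1 (by omega)
  · rw [mul_one_add, norm_eq_zpow_neg_valuation hη, ← zpow_add₀ hpR.ne']
    gcongr
    · exact hp1.le
    · omega
    · exact (zpow_le_zpow_right₀ hp1.le (by omega)).trans_eq (zpow_one _)

theorem exists_lt_norm_sub_natCast_mul_zpow_lt {y : ℚ_[p]} {u : ℤ} (hy : ‖y‖ ≤ (p : ℝ) ^ (-u)) :
    ∃ j < p, ‖y - j * (p : ℚ_[p]) ^ u‖ < (p : ℝ) ^ (-u) := by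
  have hp0 : (p : ℚ_[p]) ≠ 0 := mod_cast hp.out.ne_zero
  have hpR : (0 : ℝ) < p := mod_cast hp.out.pos
  have hpu : (0 : ℝ) < (p : ℝ) ^ (-u) := zpow_pos hpR _
  have hz : ‖y * (p : ℚ_[p]) ^ (-u)‖ ≤ 1 := by
    rw [norm_mul, norm_p_zpow, neg_neg]
    calc ‖y‖ * (p : ℝ) ^ u ≤ (p : ℝ) ^ (-u) * (p : ℝ) ^ u := by gcongr
      _ = 1 := by rw [← zpow_add₀ hpR.ne', neg_add_cancel, zpow_zero]
  obtain ⟨j, hjp, hj⟩ := PadicInt.exists_mem_range (⟨_, hz⟩ : ℤ_[p])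
  refine ⟨j, hjp, ?_⟩
  rw [IsLocalRing.mem_maximalIdeal, PadicInt.mem_nonunits, PadicInt.norm_def] at hj
  have hyj : y - j * (p : ℚ_[p]) ^ u = (y * (p : ℚ_[p]) ^ (-u) - j) * (p : ℚ_[p]) ^ u := by
    rw [sub_mul, mul_assoc, ← zpow_add₀ hp0, neg_add_cancel, zpow_zero, mul_one]
  rw [hyj, norm_mul, norm_p_zpow]
  exact mul_lt_of_lt_one_left hpu hj

theorem norm_natCast_sub_natCast_eq_one {j k : ℕ} (hj : j < p) (hk : k < p) (hjk : j ≠ k) :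
    ‖(j : ℚ_[p]) - k‖ = 1 := by
  rw [← Int.cast_natCast, ← Int.cast_natCast (R := ℚ_[p]) k, ← Int.cast_sub]
  refine le_antisymm (norm_int_le_one _) (not_lt.mp fun hdvd ↦ ?_)
  rw [norm_intCast_lt_one_iff] at hdvd
  have := Int.eq_zero_of_abs_lt_dvd hdvd (abs_sub_lt_iff.mpr ⟨by omega, by omega⟩)
  omega

theorem norm_le_zpow_neg_add_one_iff (x : ℚ_[p]) (u : ℤ) :
    ‖x‖ ≤ (p : ℝ) ^ (-(u + 1)) ↔ ‖x‖ < (p : ℝ) ^ (-u) := by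
  rw [norm_le_pow_iff_norm_lt_pow_add_one, show -(u + 1) + 1 = -u by ring]

theorem natCast_mul_ofReal_zpow_neg_add_one (u : ℤ) :
    (p : ENNReal) * ENNReal.ofReal ((p : ℝ) ^ (-(u + 1))) = ENNReal.ofReal ((p : ℝ) ^ (-u)) := by
  have hpR : (0 : ℝ) < p := mod_cast hp.out.pos
  rw [← ENNReal.ofReal_natCast, ← ENNReal.ofReal_mul hpR.le, ← zpow_one_add₀ hpR.ne']
  ring_nf

theorem exists_norm_natCast_pow_mul_le_one (x : ℚ_[p]) :
    ∃ n : ℕ, ‖((p ^ n : ℕ) : ℚ_[p]) * x‖ ≤ 1 := by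
  have hp1 : (p : ℝ)⁻¹ < 1 := inv_lt_one_of_one_lt₀ (mod_cast hp.out.one_lt)
  have := (tendsto_pow_atTop_nhds_zero_of_lt_one (by positivity) hp1).mul_const ‖x‖
  rw [zero_mul] at this
  obtain ⟨n, hn⟩ := (this.eventually (ge_mem_nhds one_pos)).exists
  exact ⟨n, by simpa [norm_mul, norm_p] using hn⟩

theorem norm_eq_one_of_map_add_eq_mul {ψ : ℚ_[p] → ℂ} (hψ_add : ∀ x y, ψ (x + y) = ψ x * ψ y)
    (hψ_triv : ∀ x : ℚ_[p], ‖x‖ ≤ 1 → ψ x = 1) (x : ℚ_[p]) : ‖ψ x‖ = 1 := by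
  let χ : AddChar ℚ_[p] ℂ := ⟨ψ, hψ_triv 0 (by simp), hψ_add⟩
  obtain ⟨n, hn⟩ := exists_norm_natCast_pow_mul_le_one x
  refine Complex.norm_eq_one_of_pow_eq_one (n := p ^ n) ?_ (pow_ne_zero _ hp.out.ne_zero)
  rw [← nsmul_eq_mul] at hn
  exact (χ.map_nsmul_eq_pow _ x).symm.trans (hψ_triv _ hn)

theorem continuous_of_map_add_eq_mul {ψ : ℚ_[p] → ℂ} (hψ_add : ∀ x y, ψ (x + y) = ψ x * ψ y)
    (hψ_triv : ∀ x : ℚ_[p], ‖x‖ ≤ 1 → ψ x = 1) : Continuous ψ := by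
  refine continuous_of_map_add_eq_mul_of_eventually_eq_one hψ_add ?_
  filter_upwards [Metric.closedBall_mem_nhds (0 : ℚ_[p]) one_pos] with x hx
  exact hψ_triv x (mem_closedBall_zero_iff.mp hx)

theorem rpow_neg_add_one_lt_one {σ : ℝ} (hσ : -1 < σ) : (p : ℝ) ^ (-(σ + 1)) < 1 :=
  Real.rpow_lt_one_of_one_lt_of_neg (mod_cast hp.out.one_lt) (by linarith)

theorem nonneg_of_forall_norm_le_mul_rpow {g : ℤ → ℂ} {A σ : ℝ}
    (hg : ∀ v : ℤ, ‖g v‖ ≤ A * (p : ℝ) ^ (-(v : ℝ) * σ)) : 0 ≤ A :=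
  nonneg_of_mul_nonneg_left ((norm_nonneg _).trans (hg 0))
    (Real.rpow_pos_of_pos (mod_cast hp.out.pos) _)

variable [MeasurableSpace ℚ_[p]] [BorelSpace ℚ_[p]]

theorem measurableSet_normBall (t : ℤ) : MeasurableSet {y : ℚ_[p] | ‖y‖ ≤ (p : ℝ) ^ (-t)} :=
  measurableSet_le measurable_norm measurable_const

theorem measurableSet_normSphere (u : ℤ) : MeasurableSet {y : ℚ_[p] | ‖y‖ = (p : ℝ) ^ (-u)} :=
  measurableSet_eq_fun measurable_norm measurable_const

theorem measurable_valuation : Measurable (valuation : ℚ_[p] → ℤ) := by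
  refine measurable_to_countable' fun u ↦ (measurableSet_insert (a := (0 : ℚ_[p]))).mp ?_
  have : insert 0 (valuation ⁻¹' {u}) = insert 0 {y : ℚ_[p] | ‖y‖ = (p : ℝ) ^ (-u)} := by
    ext y
    rcases eq_or_ne y 0 with rfl | hy
    · simp
    · simp only [Set.mem_insert_iff, hy, false_or, Set.mem_preimage, Set.mem_singleton_iff,
        Set.mem_ofPred_eq, norm_eq_zpow_neg_iff hy]
  rw [this]
  exact (measurableSet_eq_fun measurable_norm measurable_const).insert 0

variable {μ : Measure ℚ_[p]}

theorem setIntegral_normBall_eq_of_setIntegral_normSphere_eq_zero {E : Type*}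
    [NormedAddCommGroup E] [NormedSpace ℝ E] {f : ℚ_[p] → E} {c t : ℤ} (hct : c ≤ t)
    (hf : IntegrableOn f {y : ℚ_[p] | ‖y‖ ≤ (p : ℝ) ^ (-c)} μ)
    (hf0 : ∀ u, c ≤ u → u < t → ∫ y in {y : ℚ_[p] | ‖y‖ = (p : ℝ) ^ (-u)}, f y ∂μ = 0) :
    ∫ y in {y : ℚ_[p] | ‖y‖ ≤ (p : ℝ) ^ (-c)}, f y ∂μ =
      ∫ y in {y : ℚ_[p] | ‖y‖ ≤ (p : ℝ) ^ (-t)}, f y ∂μ := by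
  have hp1 : 1 ≤ (p : ℝ) := mod_cast hp.out.one_lt.le
  have hsub {u : ℤ} (hcu : c ≤ u) :
      {y : ℚ_[p] | ‖y‖ ≤ (p : ℝ) ^ (-u)} ⊆ {y | ‖y‖ ≤ (p : ℝ) ^ (-c)} :=
    fun _ hy ↦ hy.trans (zpow_le_zpow_right₀ hp1 (by omega))
  rw [← sub_eq_zero, ← setIntegral_sdiff (measurableSet_normBall t) hf (hsub hct),
    normBall_sdiff_normBall_eq_biUnion, integral_biUnion_finset _
      (fun u _ ↦ measurableSet_normSphere u) (fun u _ v _ ↦ disjoint_normSphere)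
      (fun u hu ↦ hf.mono_set fun y hy ↦ hsub (Finset.mem_Ico.mp hu).1 (le_of_eq hy))]
  exact Finset.sum_eq_zero fun u hu ↦ hf0 u (Finset.mem_Ico.mp hu).1 (Finset.mem_Ico.mp hu).2

section AddLeftInvariant

variable [μ.IsAddLeftInvariant]

theorem measure_normBall_eq_mul_succ (u : ℤ) :
    μ {y : ℚ_[p] | ‖y‖ ≤ (p : ℝ) ^ (-u)} = p * μ {y | ‖y‖ ≤ (p : ℝ) ^ (-(u + 1))} := by
  set B := {y : ℚ_[p] | ‖y‖ ≤ (p : ℝ) ^ (-(u + 1))}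
  set a : ℕ → ℚ_[p] := fun j ↦ j * (p : ℚ_[p]) ^ u
  have mem_translate (j : ℕ) (y : ℚ_[p]) : y ∈ (-a j + ·) ⁻¹' B ↔ ‖y - a j‖ < (p : ℝ) ^ (-u) := by
    rw [Set.mem_preimage, Set.mem_ofPred_eq, neg_add_eq_sub, norm_le_zpow_neg_add_one_iff]
  have hnorm_a (j : ℕ) : ‖a j‖ ≤ (p : ℝ) ^ (-u) := by
    simpa [a, norm_p_zpow] using
      mul_le_of_le_one_left (zpow_pos (mod_cast hp.out.pos : (0 : ℝ) < p) (-u)).le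
        (norm_int_le_one (p := p) j)
  have hcover : {y : ℚ_[p] | ‖y‖ ≤ (p : ℝ) ^ (-u)} = ⋃ j ∈ Finset.range p, (-a j + ·) ⁻¹' B := by
    ext y
    simp only [Set.mem_iUnion, Finset.mem_range, exists_prop, mem_translate, Set.mem_ofPred_eq]
    refine ⟨exists_lt_norm_sub_natCast_mul_zpow_lt, fun ⟨j, _, hj⟩ ↦ ?_⟩
    rw [← sub_add_cancel y (a j)]
    exact (IsUltrametricDist.norm_add_le_max _ _).trans (max_le hj.le (hnorm_a j))
  have hdisj : (↑(Finset.range p) : Set ℕ).PairwiseDisjoint (fun j ↦ (-a j + ·) ⁻¹' B) := by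
    intro j hj k hk hjk
    refine Set.disjoint_left.mpr fun y hyj hyk ↦ ?_
    rw [mem_translate] at hyj hyk
    have hdist : ‖a j - a k‖ < (p : ℝ) ^ (-u) := by
      rw [← dist_eq_norm, dist_comm] at hyj
      rw [← dist_eq_norm] at hyk ⊢
      exact (dist_triangle_max _ y _).trans_lt (max_lt hyj hyk)
    simp only [Finset.coe_range, Set.mem_Iio] at hj hk
    rw [← sub_mul, norm_mul, norm_natCast_sub_natCast_eq_one hj hk hjk, one_mul,
      norm_p_zpow] at hdist
    exact hdist.false
  have hB : MeasurableSet B := measurableSet_le measurable_norm measurable_const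
  rw [hcover, measure_biUnion_finset hdisj fun j _ ↦ hB.preimage (measurable_const_add _)]
  simp [measure_preimage_add]

theorem measure_normBall_zpow (u : ℤ) :
    μ {y : ℚ_[p] | ‖y‖ ≤ (p : ℝ) ^ (-u)} =
      ENNReal.ofReal ((p : ℝ) ^ (-u)) * μ {y | ‖y‖ ≤ 1} := by
  induction u using Int.induction_on with
  | zero => simp
  | succ n ih =>
    rw [measure_normBall_eq_mul_succ, ← natCast_mul_ofReal_zpow_neg_add_one, mul_assoc] at ih
    exact (ENNReal.mul_right_inj (mod_cast hp.out.ne_zero) (ENNReal.natCast_ne_top p)).mp ih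
  | pred n ih =>
    rw [measure_normBall_eq_mul_succ, sub_add_cancel, ih, ← mul_assoc,
      ← natCast_mul_ofReal_zpow_neg_add_one (-n - 1), sub_add_cancel]

theorem measure_normSphere_le (hμ : μ {y : ℚ_[p] | ‖y‖ ≤ 1} = 1) (u : ℤ) :
    μ {y : ℚ_[p] | ‖y‖ = (p : ℝ) ^ (-u)} ≤ ENNReal.ofReal ((p : ℝ) ^ (-u)) := by
  calc μ {y : ℚ_[p] | ‖y‖ = (p : ℝ) ^ (-u)}
      ≤ μ {y : ℚ_[p] | ‖y‖ ≤ (p : ℝ) ^ (-u)} := measure_mono fun y hy ↦ le_of_eq hy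
    _ = ENNReal.ofReal ((p : ℝ) ^ (-u)) := by rw [measure_normBall_zpow, hμ, mul_one]

theorem lintegral_normSphere_radial_le (hμ : μ {y : ℚ_[p] | ‖y‖ ≤ 1} = 1) (g : ℤ → ℂ) (u : ℤ) :
    ∫⁻ y in {y : ℚ_[p] | ‖y‖ = (p : ℝ) ^ (-u)}, ‖g y.valuation‖ₑ ∂μ ≤
      ENNReal.ofReal (‖g u‖ * (p : ℝ) ^ (-u)) := by
  rw [setLIntegral_congr_fun (measurableSet_normSphere u)
    (fun y hy ↦ by rw [valuation_eq_of_norm_eq hy]), setLIntegral_const,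
    ENNReal.ofReal_mul (norm_nonneg _), ofReal_norm]
  exact mul_le_mul_right (measure_normSphere_le hμ u) _

theorem norm_setIntegral_normSphere_radial_mul_le (hμ : μ {y : ℚ_[p] | ‖y‖ ≤ 1} = 1)
    (g : ℤ → ℂ) {χ : ℚ_[p] → ℂ} (hχ : ∀ y, ‖χ y‖ ≤ 1) (u : ℤ) :
    ‖∫ y in {y : ℚ_[p] | ‖y‖ = (p : ℝ) ^ (-u)}, g y.valuation * χ y ∂μ‖ ≤
      ‖g u‖ * (p : ℝ) ^ (-u) := by
  have hμS := measure_normSphere_le hμ u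
  refine (norm_setIntegral_le_of_norm_le_const (C := ‖g u‖)
    (hμS.trans_lt ENNReal.ofReal_lt_top) fun y hy ↦ ?_).trans ?_
  · rw [norm_mul, valuation_eq_of_norm_eq hy]
    exact mul_le_of_le_one_right (norm_nonneg _) (hχ y)
  · refine mul_le_mul_of_nonneg_left ?_ (norm_nonneg _)
    exact ENNReal.toReal_le_of_le_ofReal (zpow_pos (mod_cast hp.out.pos) _).le hμS

theorem setIntegral_normSphere_radial_mul_addChar_eq_zero (g : ℤ → ℂ) {ψ : ℚ_[p] → ℂ}
    (hψ_add : ∀ x y, ψ (x + y) = ψ x * ψ y) (hψ_nontriv : ∃ x : ℚ_[p], ‖x‖ = p ∧ ψ x ≠ 1)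
    {u : ℤ} {η : ℚ_[p]} (hη : (p : ℝ) ^ (u + 1) < ‖η‖) :
    ∫ y in {y : ℚ_[p] | ‖y‖ = (p : ℝ) ^ (-u)}, g y.valuation * ψ (-(y * η)) ∂μ = 0 := by
  obtain ⟨x, hx, hψx⟩ := hψ_nontriv
  have hpR : (0 : ℝ) < p := mod_cast hp.out.pos
  have hη0 : η ≠ 0 := by
    rintro rfl
    exact (zpow_pos hpR _).not_ge (by simpa using hη.le)
  rw [setIntegral_congr_fun (measurableSet_normSphere u)
    (fun y hy ↦ by rw [valuation_eq_of_norm_eq hy]), integral_const_mul]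
  have hsmall : ‖-(x / η)‖ < (p : ℝ) ^ (-u) := by
    rw [norm_neg, norm_div, hx, div_lt_iff₀ (norm_pos_iff.mpr hη0)]
    calc (p : ℝ) = (p : ℝ) ^ (-u) * (p : ℝ) ^ (u + 1) := by
          rw [← zpow_add₀ hpR.ne', neg_add_cancel_left, zpow_one]
      _ < (p : ℝ) ^ (-u) * ‖η‖ := mul_lt_mul_of_pos_left hη (zpow_pos hpR _)
  rw [setIntegral_eq_zero_of_add_left_eigen (measurableSet_normSphere u)
    (IsUltrametricDist.preimage_add_left_normSphere hsmall) (fun y ↦ ?_) hψx, mul_zero]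
  rw [← hψ_add]
  congr 1
  field_simp
  ring

end AddLeftInvariant

variable [μ.IsAddHaarMeasure]

theorem lintegral_normBall_radial_le (hμ : μ {y : ℚ_[p] | ‖y‖ ≤ 1} = 1) {g : ℤ → ℂ} {A σ : ℝ}
    (hσ : -1 < σ) (hg : ∀ v : ℤ, ‖g v‖ ≤ A * (p : ℝ) ^ (-(v : ℝ) * σ)) (t : ℤ) :
    ∫⁻ y in {y : ℚ_[p] | ‖y‖ ≤ (p : ℝ) ^ (-t)}, ‖g y.valuation‖ₑ ∂μ ≤
      ENNReal.ofReal (A * (1 - (p : ℝ) ^ (-(σ + 1)))⁻¹ * (p : ℝ) ^ (-(t : ℝ) * (σ + 1))) := by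
  have hpR : (0 : ℝ) < p := mod_cast hp.out.pos
  set r := (p : ℝ) ^ (-(σ + 1))
  have hr0 : 0 ≤ r := Real.rpow_nonneg hpR.le _
  have hr1 : r < 1 := rpow_neg_add_one_lt_one hσ
  have hA := nonneg_of_forall_norm_le_mul_rpow hg
  set B := A * (p : ℝ) ^ (-(t : ℝ) * (σ + 1)) with hB
  have hterm (n : ℕ) : ‖g (t + n)‖ * (p : ℝ) ^ (-(t + n : ℤ)) ≤ B * r ^ n := by
    calc ‖g (t + n)‖ * (p : ℝ) ^ (-(t + n : ℤ))
        ≤ A * ((p : ℝ) ^ (-((t + n : ℤ) : ℝ) * σ) * (p : ℝ) ^ (-(t + n : ℤ))) := by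
          rw [← mul_assoc]; gcongr; exact hg _
      _ = B * r ^ n := by
          rw [rpow_neg_mul_mul_zpow_neg hpR, ← Real.rpow_natCast, ← Real.rpow_mul hpR.le,
            mul_assoc, ← Real.rpow_add hpR]
          push_cast
          ring_nf
  have hdisj : Pairwise (Function.onFun Disjoint
      fun n : ℕ ↦ {y : ℚ_[p] | ‖y‖ = (p : ℝ) ^ (-(t + n))}) := fun m n hmn ↦
    Set.disjoint_left.mpr fun y hm hn ↦ hmn (by
      have := (valuation_eq_of_norm_eq hm).symm.trans (valuation_eq_of_norm_eq hn)
      omega)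
  calc ∫⁻ y in {y : ℚ_[p] | ‖y‖ ≤ (p : ℝ) ^ (-t)}, ‖g y.valuation‖ₑ ∂μ
      ≤ ∫⁻ y in ⋃ n : ℕ, {y : ℚ_[p] | ‖y‖ = (p : ℝ) ^ (-(t + n))}, ‖g y.valuation‖ₑ ∂μ :=
        (lintegral_mono_set (normBall_subset_insert_iUnion_normSphere t)).trans_eq
          (setLIntegral_congr (insert_ae_eq_self 0 _))
    _ = ∑' n : ℕ, ∫⁻ y in {y : ℚ_[p] | ‖y‖ = (p : ℝ) ^ (-(t + n))}, ‖g y.valuation‖ₑ ∂μ :=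
        lintegral_iUnion (fun n ↦ measurableSet_normSphere _) hdisj _
    _ ≤ ∑' n : ℕ, ENNReal.ofReal (B * r ^ n) := ENNReal.tsum_le_tsum fun n ↦
        (lintegral_normSphere_radial_le hμ g _).trans (ENNReal.ofReal_le_ofReal (hterm n))
    _ = ENNReal.ofReal (A * (1 - r)⁻¹ * (p : ℝ) ^ (-(t : ℝ) * (σ + 1))) := by
        rw [← ENNReal.ofReal_tsum_of_nonneg (fun n ↦ by positivity)
          ((summable_geometric_of_lt_one hr0 hr1).mul_left B), tsum_mul_left,
          tsum_geometric_of_lt_one hr0 hr1, hB]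
        ring_nf

theorem integrableOn_normBall_radial_mul (hμ : μ {y : ℚ_[p] | ‖y‖ ≤ 1} = 1) {g : ℤ → ℂ}
    {A σ : ℝ} (hσ : -1 < σ) (hg : ∀ v : ℤ, ‖g v‖ ≤ A * (p : ℝ) ^ (-(v : ℝ) * σ))
    {χ : ℚ_[p] → ℂ} (hχ_cont : Continuous χ) (hχ : ∀ y, ‖χ y‖ ≤ 1) (t : ℤ) :
    IntegrableOn (fun y ↦ g y.valuation * χ y) {y : ℚ_[p] | ‖y‖ ≤ (p : ℝ) ^ (-t)} μ := by
  refine Integrable.mul_bdd ⟨(measurable_from_top.comp measurable_valuation).aestronglyMeasurable,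
    ?_⟩ hχ_cont.aestronglyMeasurable (ae_of_all _ hχ)
  rw [hasFiniteIntegral_def]
  exact (lintegral_normBall_radial_le hμ hσ hg t).trans_lt ENNReal.ofReal_lt_top

theorem norm_setIntegral_normBall_radial_mul_le (hμ : μ {y : ℚ_[p] | ‖y‖ ≤ 1} = 1)
    {g : ℤ → ℂ} {A σ : ℝ} (hσ : -1 < σ) (hg : ∀ v : ℤ, ‖g v‖ ≤ A * (p : ℝ) ^ (-(v : ℝ) * σ))
    {χ : ℚ_[p] → ℂ} (hχ : ∀ y, ‖χ y‖ ≤ 1) (t : ℤ) :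
    ‖∫ y in {y : ℚ_[p] | ‖y‖ ≤ (p : ℝ) ^ (-t)}, g y.valuation * χ y ∂μ‖ ≤
      A * (1 - (p : ℝ) ^ (-(σ + 1)))⁻¹ * (p : ℝ) ^ (-(t : ℝ) * (σ + 1)) := by
  refine (norm_integral_le_lintegral_norm _).trans (ENNReal.toReal_le_of_le_ofReal ?_ ?_)
  · have := nonneg_of_forall_norm_le_mul_rpow hg
    have := sub_pos.mpr (rpow_neg_add_one_lt_one (p := p) hσ)
    positivity
  · refine (lintegral_mono fun y ↦ ?_).trans (lintegral_normBall_radial_le hμ hσ hg t)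
    rw [norm_mul, ENNReal.ofReal_mul (norm_nonneg _), ofReal_norm]
    exact mul_le_of_le_one_right' (ENNReal.ofReal_le_one.mpr (hχ y))

theorem norm_setIntegral_normBall_radial_mul_addChar_le (hμ : μ {y : ℚ_[p] | ‖y‖ ≤ 1} = 1)
    {g : ℤ → ℂ} {A σ : ℝ} (hσ : -1 < σ) (hg : ∀ v : ℤ, ‖g v‖ ≤ A * (p : ℝ) ^ (-(v : ℝ) * σ))
    {ψ : ℚ_[p] → ℂ} (hψ_add : ∀ x y, ψ (x + y) = ψ x * ψ y)
    (hψ_triv : ∀ x : ℚ_[p], ‖x‖ ≤ 1 → ψ x = 1) (hψ_nontriv : ∃ x : ℚ_[p], ‖x‖ = p ∧ ψ x ≠ 1)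
    (c : ℤ) (η : ℚ_[p]) :
    ‖∫ y in {y : ℚ_[p] | ‖y‖ ≤ (p : ℝ) ^ (-c)}, g y.valuation * ψ (-(y * η)) ∂μ‖ ≤
      A * (1 - (p : ℝ) ^ (-(σ + 1)))⁻¹ * ((p : ℝ) ^ (-c) + p) ^ (σ + 1) *
        (1 + ‖η‖) ^ (-σ - 1) := by
  have hpR : (0 : ℝ) < p := mod_cast hp.out.pos
  have hψ (y : ℚ_[p]) : ‖ψ (-(y * η))‖ ≤ 1 := (norm_eq_one_of_map_add_eq_mul hψ_add hψ_triv _).le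
  obtain ⟨t, hct, hlarge, hcut⟩ := exists_zpow_neg_mul_one_add_norm_le c η
  have hint := integrableOn_normBall_radial_mul hμ hσ hg (χ := fun y ↦ ψ (-(y * η)))
    ((continuous_of_map_add_eq_mul hψ_add hψ_triv).comp (by fun_prop)) hψ c
  rw [setIntegral_normBall_eq_of_setIntegral_normSphere_eq_zero hct hint fun u hcu hut ↦
    setIntegral_normSphere_radial_mul_addChar_eq_zero g hψ_add hψ_nontriv (hlarge u hcu hut)]
  have hdecay : (p : ℝ) ^ (-(t : ℝ) * (σ + 1)) ≤
      ((p : ℝ) ^ (-c) + p) ^ (σ + 1) * (1 + ‖η‖) ^ (-σ - 1) := by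
    rw [Real.rpow_mul hpR.le, ← Int.cast_neg, Real.rpow_intCast, ← neg_add']
    exact rpow_le_mul_rpow_neg_of_mul_le (zpow_pos hpR _).le (by positivity) (by linarith) hcut
  have := nonneg_of_forall_norm_le_mul_rpow hg
  have := sub_pos.mpr (rpow_neg_add_one_lt_one (p := p) hσ)
  calc _ ≤ A * (1 - (p : ℝ) ^ (-(σ + 1)))⁻¹ * (p : ℝ) ^ (-(t : ℝ) * (σ + 1)) :=
        norm_setIntegral_normBall_radial_mul_le hμ hσ hg hψ t
    _ ≤ _ := by rw [mul_assoc _ (_ ^ (σ + 1))]; gcongr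

end Padic

theorem padic_modified_norm_oscillatory_integral_general
    (ℓ : ℕ) [Fact ℓ.Prime]
    [MeasurableSpace ℚ_[ℓ]] [BorelSpace ℚ_[ℓ]]
    (μ : Measure ℚ_[ℓ]) [μ.IsAddHaarMeasure]
    (hμ : μ {y : ℚ_[ℓ] | ‖y‖ ≤ 1} = 1)
    (ψ : ℚ_[ℓ] → ℂ)
    (hψ_add : ∀ x y : ℚ_[ℓ], ψ (x + y) = ψ x * ψ y)
    (hψ_triv : ∀ x : ℚ_[ℓ], ‖x‖ ≤ 1 → ψ x = 1)
    (hψ_nontriv : ∃ x : ℚ_[ℓ], ‖x‖ = (ℓ : ℝ) ∧ ψ x ≠ 1)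
    (c : ℤ) (s : ℂ) (hs : -1 < s.re) :
    (∀ u : ℤ, c ≤ u → ∀ η : ℚ_[ℓ], (ℓ : ℝ) ^ (u + 2) < ‖η‖ →
        ∫ y in {y : ℚ_[ℓ] | ‖y‖ = (ℓ : ℝ) ^ (-u)},
          (((ℓ : ℝ) ^ (-(2 * Int.fdiv y.valuation 2)) : ℝ) : ℂ) ^ s * ψ (-(y * η)) ∂μ
          = 0) ∧
    (∃ C : ℝ, ∀ u : ℤ, c ≤ u → ∀ η : ℚ_[ℓ],
        ‖∫ y in {y : ℚ_[ℓ] | ‖y‖ = (ℓ : ℝ) ^ (-u)},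
            (((ℓ : ℝ) ^ (-(2 * Int.fdiv y.valuation 2)) : ℝ) : ℂ) ^ s * ψ (-(y * η)) ∂μ‖ ≤
          C * (ℓ : ℝ) ^ (-(u : ℝ) * (s.re + 1))) ∧
    (∃ C : ℝ, ∀ η : ℚ_[ℓ],
        ‖∫ y in {y : ℚ_[ℓ] | ‖y‖ ≤ (ℓ : ℝ) ^ (-c)},
            (((ℓ : ℝ) ^ (-(2 * Int.fdiv y.valuation 2)) : ℝ) : ℂ) ^ s * ψ (-(y * η)) ∂μ‖ ≤
          C * (1 + ‖η‖) ^ (-s.re - 1)) := by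
  have hℓ1 : 1 < (ℓ : ℝ) := mod_cast (Fact.out : ℓ.Prime).one_lt
  set g : ℤ → ℂ := fun v ↦ (((ℓ : ℝ) ^ (-(2 * Int.fdiv v 2)) : ℝ) : ℂ) ^ s
  have hg (v : ℤ) : ‖g v‖ ≤ (ℓ : ℝ) ^ |s.re| * (ℓ : ℝ) ^ (-(v : ℝ) * s.re) :=
    norm_ofReal_zpow_two_fdiv_cpow_le hℓ1.le v s
  refine ⟨fun u _ η hη ↦ ?_, ⟨(ℓ : ℝ) ^ |s.re|, fun u _ η ↦ ?_⟩,
    ⟨_, Padic.norm_setIntegral_normBall_radial_mul_addChar_le hμ hs hg hψ_add hψ_triv hψ_nontriv c⟩⟩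
  · exact Padic.setIntegral_normSphere_radial_mul_addChar_eq_zero g hψ_add hψ_nontriv
      ((zpow_lt_zpow_right₀ hℓ1 (by omega)).trans hη)
  calc _ ≤ ‖g u‖ * (ℓ : ℝ) ^ (-u) := Padic.norm_setIntegral_normSphere_radial_mul_le hμ g
        (fun y ↦ (Padic.norm_eq_one_of_map_add_eq_mul hψ_add hψ_triv _).le) u
    _ ≤ (ℓ : ℝ) ^ |s.re| * ((ℓ : ℝ) ^ (-(u : ℝ) * s.re) * (ℓ : ℝ) ^ (-u)) := by
        rw [← mul_assoc]; gcongr; exact hg u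
    _ = (ℓ : ℝ) ^ |s.re| * (ℓ : ℝ) ^ (-(u : ℝ) * (s.re + 1)) := by
        rw [rpow_neg_mul_mul_zpow_neg (zero_lt_one.trans hℓ1)]

/-- Oscillatory `ℓ`-adic integrals of the modified norm `|y|'^s` against the standard
additive character: vanishing on shells of exact valuation `u` when `|η|_ℓ > ℓ^{u+2}`,
a shell bound `C ℓ^{-u(σ+1)}`, and the resulting decay `(1+|η|_ℓ)^{-σ-1}` for the
integral over `ℓ^c ℤ_ℓ`. -/
theorem padic_modified_norm_oscillatory_integral
    (ℓ : ℕ) [Fact ℓ.Prime] (hodd : ℓ ≠ 2)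
    [MeasurableSpace ℚ_[ℓ]] [BorelSpace ℚ_[ℓ]]
    (μ : Measure ℚ_[ℓ]) [μ.IsAddHaarMeasure]
    (hμ : μ {y : ℚ_[ℓ] | ‖y‖ ≤ 1} = 1)
    (ψ : ℚ_[ℓ] → ℂ)
    (hψ_add : ∀ x y : ℚ_[ℓ], ψ (x + y) = ψ x * ψ y)
    (hψ_triv : ∀ x : ℚ_[ℓ], ‖x‖ ≤ 1 → ψ x = 1)
    (hψ_nontriv : ∃ x : ℚ_[ℓ], ‖x‖ = (ℓ : ℝ) ∧ ψ x ≠ 1)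
    (c : ℤ) (s : ℂ) (hs : -1 < s.re) :
    (∀ u : ℤ, c ≤ u → ∀ η : ℚ_[ℓ], (ℓ : ℝ) ^ (u + 2) < ‖η‖ →
        ∫ y in {y : ℚ_[ℓ] | ‖y‖ = (ℓ : ℝ) ^ (-u)},
          (((ℓ : ℝ) ^ (-(2 * Int.fdiv y.valuation 2)) : ℝ) : ℂ) ^ s * ψ (-(y * η)) ∂μ
          = 0) ∧
    (∃ C : ℝ, ∀ u : ℤ, c ≤ u → ∀ η : ℚ_[ℓ],
        ‖∫ y in {y : ℚ_[ℓ] | ‖y‖ = (ℓ : ℝ) ^ (-u)},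
            (((ℓ : ℝ) ^ (-(2 * Int.fdiv y.valuation 2)) : ℝ) : ℂ) ^ s * ψ (-(y * η)) ∂μ‖ ≤
          C * (ℓ : ℝ) ^ (-(u : ℝ) * (s.re + 1))) ∧
    (∃ C : ℝ, ∀ η : ℚ_[ℓ],
        ‖∫ y in {y : ℚ_[ℓ] | ‖y‖ ≤ (ℓ : ℝ) ^ (-c)},
            (((ℓ : ℝ) ^ (-(2 * Int.fdiv y.valuation 2)) : ℝ) : ℂ) ^ s * ψ (-(y * η)) ∂μ‖ ≤
          C * (1 + ‖η‖) ^ (-s.re - 1)) :=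
  padic_modified_norm_oscillatory_integral_general ℓ μ hμ ψ hψ_add hψ_triv hψ_nontriv c s hs
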